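/- arXiv:2110.00545 — 7 statements merged into one kernel-verified Lean document; each statement's English description precedes it below -/
import Mathlib

section
/- Let κ be a field and A a κ-algebra such that A ≠ 0, the structure map κ → A is not surjective, and the only κ-subalgebras of A are κ and A itself. Then A is isomorphic as a κ-algebra to exactly one of: (i) κ[ε]/(ε²), (ii) κ × κ, (iii) κ(a^{1/p}) where p = char κ > 0 and a ∈ κ \ κ^p, (iv) a finite nontrivial separable field extension of κ with no intermediate subextensions other than κ and itself. -/
/-! Any `x ∉ κ` generates `A`, and it is integral since otherwise `κ[x²]` would be a proper
subalgebra; so `A ≅ κ[X]/(f)` with `f = minpoly κ x`. If `f = g * h` properly, `g(x) ∉ κ` generates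
`A` as well, so `x = q(g(x))` and `g ∣ X - q(0)`: both factors are linear, and a suitable affine
change of `x` squares to `0` (double root) or is a nontrivial idempotent (distinct roots). If `f` is
irreducible, `A` is a field; when it is inseparable, `f = g(X^p)`, and `κ[x^p] = A` is impossible
because `minpoly κ (x^p)` divides `g`, so `x^p ∈ κ`. Reducedness, being a field and separability
tell the four cases apart. -/

open Polynomial

section PrimeAlgebraClassification

variable (κ : Type*) [Field κ] (A : Type*) [CommRing A] [Algebra κ A]

/-- Case (i): `A ≅ κ[ε]/(ε²)`. -/
def IsDualNumberCase : Prop := Nonempty (A ≃ₐ[κ] DualNumber κ)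

/-- Case (ii): `A ≅ κ × κ`. -/
def IsProdCase : Prop := Nonempty (A ≃ₐ[κ] (κ × κ))

/-- Case (iii): `A ≅ κ(a^{1/p})` where `p = char κ > 0` and `a ∈ κ \ κ^p`. -/
def IsInsepCase : Prop :=
  ∃ p : ℕ, p.Prime ∧ CharP κ p ∧
    ∃ a : κ, a ∉ Set.range (fun x : κ => x ^ p) ∧
      Nonempty (A ≃ₐ[κ] AdjoinRoot (X ^ p - C a))

/-- Case (iv): `A` is a finite nontrivial separable field extension of `κ`
(having no intermediate subalgebras other than `κ` and `A`, which is part of the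
prime-algebra hypothesis). -/
def IsSepFieldCase : Prop :=
  IsField A ∧ Module.Finite κ A ∧ Algebra.IsSeparable κ A ∧
    ¬ Function.Surjective (algebraMap κ A)

variable {κ A}

open DualNumber

theorem adjoin_eq_top_of_notMem_bot (hsub : ∀ S : Subalgebra κ A, S = ⊥ ∨ S = ⊤) {x : A}
    (hx : x ∉ (⊥ : Subalgebra κ A)) : Algebra.adjoin κ {x} = ⊤ :=
  (hsub _).resolve_left fun h => hx (h ▸ Algebra.subset_adjoin rfl)

noncomputable def equivAdjoinRootMinpolyOfAdjoinEqTop {x : A} (h : Algebra.adjoin κ {x} = ⊤) :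
    A ≃ₐ[κ] AdjoinRoot (minpoly κ x) :=
  ((Subalgebra.equivOfEq _ _ h).trans Subalgebra.topEquiv).symm.trans
    (AlgEquiv.adjoinSingletonEquivAdjoinRootMinpoly κ x)

theorem finrank_eq_natDegree_minpoly {x : A} (hx : IsIntegral κ x)
    (h : Algebra.adjoin κ {x} = ⊤) : Module.finrank κ A = (minpoly κ x).natDegree := by
  rw [(equivAdjoinRootMinpolyOfAdjoinEqTop h).toLinearEquiv.finrank_eq,
    (AdjoinRoot.powerBasis' (minpoly.monic hx)).finrank, AdjoinRoot.powerBasis'_dim]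

theorem finite_of_adjoin_eq_top {x : A} (hx : IsIntegral κ x) (h : Algebra.adjoin κ {x} = ⊤) :
    Module.Finite κ A :=
  ⟨by rw [← Algebra.top_toSubmodule, ← h]; exact hx.fg_adjoin_singleton⟩

theorem isField_of_irreducible_minpoly {x : A} (h : Algebra.adjoin κ {x} = ⊤)
    (hirr : Irreducible (minpoly κ x)) : IsField A :=
  haveI := Fact.mk hirr
  (equivAdjoinRootMinpolyOfAdjoinEqTop h).toMulEquiv.isField (Field.toIsField _)

theorem isAlgebraic_of_mem_adjoin_sq {x : A} (h : x ∈ Algebra.adjoin κ {x ^ 2}) :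
    IsAlgebraic κ x := by
  rw [Algebra.adjoin_singleton_eq_range_aeval] at h
  obtain ⟨q, hq⟩ := h
  refine ⟨expand κ 2 q - X, fun h0 => ?_, ?_⟩
  · simpa [coeff_expand two_pos] using congrArg (coeff · 1) h0
  · rw [map_sub, expand_aeval, aeval_X]
    exact sub_eq_zero.mpr hq

theorem isIntegral_of_forall_subalgebra (hsub : ∀ S : Subalgebra κ A, S = ⊥ ∨ S = ⊤) (x : A) :
    IsIntegral κ x := by
  by_cases hx2 : x ^ 2 ∈ (⊥ : Subalgebra κ A)
  · obtain ⟨c, hc⟩ := Algebra.mem_bot.mp hx2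
    exact ⟨X ^ 2 - C c, monic_X_pow_sub_C c two_ne_zero, by simp [hc]⟩
  · refine (isAlgebraic_of_mem_adjoin_sq ?_).isIntegral
    rw [adjoin_eq_top_of_notMem_bot hsub hx2]
    trivial

theorem aeval_notMem_bot_of_natDegree_lt {x : A} {g : κ[X]} (hg : 0 < g.natDegree)
    (hlt : g.natDegree < (minpoly κ x).natDegree) : aeval x g ∉ (⊥ : Subalgebra κ A) := by
  intro h
  obtain ⟨c, hc⟩ := Algebra.mem_bot.mp h
  have hne : g - C c ≠ 0 := fun h0 => by
    rw [← natDegree_sub_C (a := c), h0, natDegree_zero] at hg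
    exact hg.false
  have hdvd : minpoly κ x ∣ g - C c := minpoly.dvd κ x (by simp [hc])
  have := natDegree_le_of_dvd hdvd hne
  rw [natDegree_sub_C] at this
  omega

theorem natDegree_le_one_of_adjoin_aeval_eq_top {x : A} {g : κ[X]} (hg : g ∣ minpoly κ x)
    (h : Algebra.adjoin κ {aeval x g} = ⊤) : g.natDegree ≤ 1 := by
  obtain ⟨q, hq⟩ : x ∈ (aeval (R := κ) (aeval x g)).range := by
    rw [← Algebra.adjoin_singleton_eq_range_aeval, h]
    trivial
  obtain ⟨r, hr⟩ := X_dvd_sub_C (p := q)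
  have hcomp : q.comp g - C (q.coeff 0) = g * r.comp g := by
    simpa [sub_comp, mul_comp] using congrArg (·.comp g) hr
  have hdvd : g ∣ X - C (q.coeff 0) := by
    have hX : g ∣ X - q.comp g :=
      hg.trans <| minpoly.dvd κ x <| by
        rw [map_sub, aeval_X, aeval_comp]
        exact sub_eq_zero.mpr hq.symm
    simpa using dvd_add hX (Dvd.intro _ hcomp.symm)
  simpa using natDegree_le_of_dvd hdvd (X_sub_C_ne_zero _)

theorem exists_minpoly_eq_X_sub_C_mul_X_sub_C [Nontrivial A]
    (hsub : ∀ S : Subalgebra κ A, S = ⊥ ∨ S = ⊤) {x : A} (hx : IsIntegral κ x)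
    (hirr : ¬ Irreducible (minpoly κ x)) : ∃ r s : κ, minpoly κ x = (X - C r) * (X - C s) := by
  obtain ⟨g, h, hg, hh, hgh, hg0, hh0⟩ : ∃ g h : κ[X], g.Monic ∧ h.Monic ∧
      g * h = minpoly κ x ∧ g.natDegree ≠ 0 ∧ h.natDegree ≠ 0 := by
    rw [(minpoly.monic hx).irreducible_iff_natDegree] at hirr
    push Not at hirr
    exact hirr (minpoly.ne_one κ x)
  have hdeg : (minpoly κ x).natDegree = g.natDegree + h.natDegree := by
    rw [← hgh, hg.natDegree_mul hh]
  have hlin : ∀ f : κ[X], f.Monic → f ∣ minpoly κ x → f.natDegree ≠ 0 →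
      f.natDegree < (minpoly κ x).natDegree → f = X - C (-f.coeff 0) := by
    intro f hf hdvd hf0 hlt
    have hle := natDegree_le_one_of_adjoin_aeval_eq_top hdvd
      (adjoin_eq_top_of_notMem_bot hsub (aeval_notMem_bot_of_natDegree_lt (by omega) hlt))
    rw [map_neg, sub_neg_eq_add]
    exact hf.eq_X_add_C (by omega)
  refine ⟨-g.coeff 0, -h.coeff 0, ?_⟩
  rw [← hlin g hg (Dvd.intro _ hgh) hg0 (by omega),
    ← hlin h hh (Dvd.intro_left _ hgh) hh0 (by omega), hgh]

theorem minpoly_eq_of_natDegree_eq_two [Nontrivial A] {x : A} {f : κ[X]} (hf : f.Monic)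
    (hdeg : f.natDegree = 2) (hx : x ∉ (⊥ : Subalgebra κ A)) (hfx : aeval x f = 0) :
    minpoly κ x = f := by
  have hint : IsIntegral κ x := ⟨f, hf, hfx⟩
  refine (eq_of_monic_of_dvd_of_natDegree_le (minpoly.monic hint) hf (minpoly.dvd κ x hfx) ?_).symm
  rw [hdeg, minpoly.two_le_natDegree_iff hint]
  exact hx

theorem nonempty_algEquiv_of_aeval_eq_zero {B : Type*} [CommRing B] [Algebra κ B]
    [Nontrivial A] [Nontrivial B] {f : κ[X]} (hf : f.Monic) (hdeg : f.natDegree = 2)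
    {x : A} {y : B} (hxgen : Algebra.adjoin κ {x} = ⊤) (hygen : Algebra.adjoin κ {y} = ⊤)
    (hx : x ∉ (⊥ : Subalgebra κ A)) (hy : y ∉ (⊥ : Subalgebra κ B))
    (hfx : aeval x f = 0) (hfy : aeval y f = 0) : Nonempty (A ≃ₐ[κ] B) :=
  ⟨((equivAdjoinRootMinpolyOfAdjoinEqTop hxgen).trans (AdjoinRoot.algEquivOfEq κ _ _
    ((minpoly_eq_of_natDegree_eq_two hf hdeg hx hfx).trans
      (minpoly_eq_of_natDegree_eq_two hf hdeg hy hfy).symm))).trans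
    (equivAdjoinRootMinpolyOfAdjoinEqTop hygen).symm⟩

theorem adjoin_eps_eq_top : Algebra.adjoin κ {ε} = (⊤ : Subalgebra κ (DualNumber κ)) := by
  rw [← range_inlAlgHom_sup_adjoin_eps (R := κ), right_eq_sup]
  rintro _ ⟨c, rfl⟩
  exact Subalgebra.algebraMap_mem _ c

theorem eps_notMem_bot : (ε : DualNumber κ) ∉ (⊥ : Subalgebra κ (DualNumber κ)) := by
  intro h
  obtain ⟨c, hc⟩ := Algebra.mem_bot.mp h
  simpa [TrivSqZeroExt.algebraMap_eq_inl] using congrArg TrivSqZeroExt.snd hc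

theorem adjoin_zero_one_eq_top : Algebra.adjoin κ {((0 : κ), (1 : κ))} = ⊤ := by
  refine top_unique fun z _ => ?_
  have hz : z = algebraMap κ (κ × κ) z.1 + algebraMap κ (κ × κ) (z.2 - z.1) * (0, 1) := by
    ext <;> simp
  rw [hz]
  exact add_mem (Subalgebra.algebraMap_mem _ _)
    (mul_mem (Subalgebra.algebraMap_mem _ _) (Algebra.subset_adjoin rfl))

theorem zero_one_notMem_bot : ((0 : κ), (1 : κ)) ∉ (⊥ : Subalgebra κ (κ × κ)) := by
  intro h
  obtain ⟨c, hc⟩ := Algebra.mem_bot.mp h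
  have h0 := congrArg Prod.fst hc
  have h1 := congrArg Prod.snd hc
  simp only [Prod.algebraMap_apply, Algebra.algebraMap_self, RingHom.id_apply] at h0 h1
  exact zero_ne_one (h0.symm.trans h1)

theorem isDualNumberCase_of_sq_eq_zero [Nontrivial A]
    (hsub : ∀ S : Subalgebra κ A, S = ⊥ ∨ S = ⊤) {n : A} (hn : n ∉ (⊥ : Subalgebra κ A))
    (hn2 : n ^ 2 = 0) : IsDualNumberCase κ A :=
  nonempty_algEquiv_of_aeval_eq_zero (monic_X_pow 2) (natDegree_X_pow 2)
    (adjoin_eq_top_of_notMem_bot hsub hn) adjoin_eps_eq_top hn eps_notMem_bot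
    (by rw [aeval_X_pow, hn2]) (by rw [aeval_X_pow, pow_two, eps_mul_eps])

theorem isProdCase_of_sq_eq_self [Nontrivial A]
    (hsub : ∀ S : Subalgebra κ A, S = ⊥ ∨ S = ⊤) {e : A} (he : e ∉ (⊥ : Subalgebra κ A))
    (he2 : e ^ 2 = e) : IsProdCase κ A :=
  nonempty_algEquiv_of_aeval_eq_zero (f := X ^ 2 - X) (monic_X_pow_sub (by simp))
    (by compute_degree!) (adjoin_eq_top_of_notMem_bot hsub he) adjoin_zero_one_eq_top he
    zero_one_notMem_bot (by simp [he2]) (by simp)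

theorem isDualNumberCase_or_isProdCase_of_minpoly_eq [Nontrivial A]
    (hsub : ∀ S : Subalgebra κ A, S = ⊥ ∨ S = ⊤) {x : A} (hx : x ∉ (⊥ : Subalgebra κ A))
    {r s : κ} (hrs : minpoly κ x = (X - C r) * (X - C s)) :
    IsDualNumberCase κ A ∨ IsProdCase κ A := by
  have hroots : (x - algebraMap κ A r) * (x - algebraMap κ A s) = 0 := by
    simpa [hrs] using minpoly.aeval κ x
  rcases eq_or_ne r s with rfl | hne
  · refine Or.inl (isDualNumberCase_of_sq_eq_zero hsub (n := x - algebraMap κ A r) ?_ ?_)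
    · exact fun h => hx (by simpa using add_mem h (Subalgebra.algebraMap_mem ⊥ r))
    · rw [pow_two, hroots]
  · set c := algebraMap κ A (s - r)⁻¹
    have hc : c * (algebraMap κ A s - algebraMap κ A r) = 1 := by
      rw [← map_sub, ← map_mul, inv_mul_cancel₀ (sub_ne_zero.mpr hne.symm), map_one]
    refine Or.inr (isProdCase_of_sq_eq_self hsub (e := c * (x - algebraMap κ A r)) ?_ ?_)
    · intro he
      have hxe : x = (algebraMap κ A s - algebraMap κ A r) * (c * (x - algebraMap κ A r)) +
          algebraMap κ A r := by
        linear_combination (-(x - algebraMap κ A r)) * hc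
      refine hx (hxe ▸ add_mem (mul_mem (sub_mem ?_ ?_) he) ?_) <;>
        exact Subalgebra.algebraMap_mem _ _
    · linear_combination c ^ 2 * hroots + c * (x - algebraMap κ A r) * hc

theorem exists_charP_expand_eq_minpoly [IsDomain A] {x : A} (hx : IsIntegral κ x)
    (hsep : ¬ IsSeparable κ x) :
    ∃ p : ℕ, p.Prime ∧ CharP κ p ∧ ∃ g : κ[X], 0 < g.natDegree ∧ expand κ p g = minpoly κ x := by
  have hirr := minpoly.irreducible hx
  have hchar : ringChar κ ≠ 0 := fun h0 =>
    have : CharP κ 0 := h0 ▸ ringChar.charP κ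
    have : CharZero κ := CharP.charP_to_charZero κ
    hsep hirr.separable
  obtain ⟨-, g, hg, hgx⟩ := (separable_or (ringChar κ) hirr).resolve_left hsep
  exact ⟨ringChar κ, (CharP.char_is_prime_or_zero κ _).resolve_right hchar, inferInstance,
    g, hg.natDegree_pos, hgx⟩

section Field

variable {K : Type*} [Field K] [Algebra κ K]

theorem isInsepCase_of_pow_mem_bot (hsub : ∀ S : Subalgebra κ K, S = ⊥ ∨ S = ⊤) {p : ℕ}
    (hp : p.Prime) [CharP κ p] {x : K} (hx : x ∉ (⊥ : Subalgebra κ K)) {a : κ}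
    (ha : x ^ p = algebraMap κ K a) : IsInsepCase κ K := by
  have := Fact.mk hp
  have : CharP K p := charP_of_injective_algebraMap (algebraMap κ K).injective p
  have hnp : a ∉ Set.range fun b : κ => b ^ p := by
    rintro ⟨b, hb⟩
    have hxb : (x - algebraMap κ K b) ^ p = 0 := by
      rw [sub_pow_char, ← map_pow, ha, ← hb, sub_self]
    exact hx (Algebra.mem_bot.mpr ⟨b, (sub_eq_zero.mp (pow_eq_zero_iff hp.ne_zero |>.mp hxb)).symm⟩)
  have hirr := X_pow_sub_C_irreducible_of_prime hp fun b hb => hnp ⟨b, hb⟩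
  have hmin : minpoly κ x = X ^ p - C a :=
    (minpoly.eq_of_irreducible_of_monic hirr (by simp [ha]) (monic_X_pow_sub_C a hp.ne_zero)).symm
  exact ⟨p, hp, inferInstance, a, hnp,
    ⟨(equivAdjoinRootMinpolyOfAdjoinEqTop (adjoin_eq_top_of_notMem_bot hsub hx)).trans
      (AdjoinRoot.algEquivOfEq κ _ _ hmin)⟩⟩

theorem isInsepCase_of_not_isSeparable (hsub : ∀ S : Subalgebra κ K, S = ⊥ ∨ S = ⊤)
    (hsep : ¬ Algebra.IsSeparable κ K) : IsInsepCase κ K := by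
  obtain ⟨x, hxsep⟩ : ∃ x : K, ¬ IsSeparable κ x := by
    by_contra! h
    exact hsep ⟨h⟩
  have hx : x ∉ (⊥ : Subalgebra κ K) := fun h => by
    obtain ⟨c, rfl⟩ := Algebra.mem_bot.mp h
    exact hxsep (isSeparable_algebraMap c)
  have hxint := isIntegral_of_forall_subalgebra hsub x
  obtain ⟨p, hp, hchar, g, hg, hgx⟩ := exists_charP_expand_eq_minpoly hxint hxsep
  rcases hsub (Algebra.adjoin κ {x ^ p}) with hbot | htop
  · have hxp : x ^ p ∈ (⊥ : Subalgebra κ K) := hbot ▸ Algebra.subset_adjoin rfl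
    obtain ⟨a, ha⟩ := Algebra.mem_bot.mp hxp
    exact isInsepCase_of_pow_mem_bot hsub hp hx ha.symm
  · have hdvd : minpoly κ (x ^ p) ∣ g :=
      minpoly.dvd κ _ (by rw [← expand_aeval, hgx, minpoly.aeval])
    have hdeg :=
      (finrank_eq_natDegree_minpoly hxint (adjoin_eq_top_of_notMem_bot hsub hx)).symm.trans
        (finrank_eq_natDegree_minpoly (isIntegral_of_forall_subalgebra hsub _) htop)
    rw [← hgx, natDegree_expand] at hdeg
    have := natDegree_le_of_dvd hdvd (ne_zero_of_natDegree_gt hg)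
    nlinarith [hp.two_le]

end Field

theorem IsDualNumberCase.not_isReduced (h : IsDualNumberCase κ A) : ¬ IsReduced A := by
  obtain ⟨e⟩ := h
  intro hA
  have := isReduced_of_injective e.symm e.symm.injective
  refine eps_notMem_bot (κ := κ) ?_
  rw [IsReduced.eq_zero (ε : DualNumber κ) ⟨2, by rw [pow_two, eps_mul_eps]⟩]
  exact zero_mem _

theorem IsProdCase.isReduced (h : IsProdCase κ A) : IsReduced A :=
  let ⟨e⟩ := h
  isReduced_of_injective e e.injective

theorem IsProdCase.not_isField (h : IsProdCase κ A) : ¬ IsField A := by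
  obtain ⟨e⟩ := h
  intro hA
  have := (e.symm.toMulEquiv.isField hA).isDomain
  have h0 : ((1 : κ), (0 : κ)) * (0, 1) = 0 := by ext <;> simp
  rcases mul_eq_zero.mp h0 with h | h <;> simp [Prod.ext_iff] at h

theorem IsInsepCase.isField (h : IsInsepCase κ A) : IsField A := by
  obtain ⟨p, hp, -, a, ha, ⟨e⟩⟩ := h
  have := Fact.mk (X_pow_sub_C_irreducible_of_prime hp fun b hb => ha ⟨b, hb⟩)
  exact e.toMulEquiv.isField (Field.toIsField _)

theorem IsInsepCase.not_isSeparable (h : IsInsepCase κ A) : ¬ Algebra.IsSeparable κ A := by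
  obtain ⟨p, hp, hchar, a, ha, ⟨e⟩⟩ := h
  have hirr := X_pow_sub_C_irreducible_of_prime hp fun b hb => ha ⟨b, hb⟩
  have := Fact.mk hirr
  intro hA
  have := AlgEquiv.Algebra.isSeparable e
  have hsep := Algebra.IsSeparable.isSeparable κ (AdjoinRoot.root (X ^ p - C a))
  rw [IsSeparable, AdjoinRoot.minpoly_root hirr.ne_zero,
    (monic_X_pow_sub_C a hp.ne_zero).leadingCoeff, inv_one, C_1, mul_one,
    separable_iff_derivative_ne_zero hirr] at hsep
  simp [derivative_X_pow, CharP.cast_eq_zero] at hsep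

theorem isReduced_of_isField (h : IsField A) : IsReduced A :=
  have := h.isDomain
  inferInstance

variable (κ A)

/-- Classification of prime algebras over an arbitrary field: a `κ`-algebra `A` with
`A ≠ 0`, `κ → A` not surjective, whose only `κ`-subalgebras are `κ` and `A`, is
isomorphic as a `κ`-algebra to **exactly one** of
(i) `κ[ε]/(ε²)`, (ii) `κ × κ`, (iii) `κ(a^{1/p})` with `p = char κ > 0`, `a ∈ κ \ κ^p`,
(iv) a finite nontrivial separable field extension of `κ` with no proper subextensions. -/
theorem primeAlgebra_classification
    (hnt : Nontrivial A)
    (hns : ¬ Function.Surjective (algebraMap κ A))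
    (hsub : ∀ S : Subalgebra κ A, S = ⊥ ∨ S = ⊤) :
    (IsDualNumberCase κ A ∨ IsProdCase κ A ∨ IsInsepCase κ A ∨ IsSepFieldCase κ A) ∧
    ¬ (IsDualNumberCase κ A ∧ IsProdCase κ A) ∧
    ¬ (IsDualNumberCase κ A ∧ IsInsepCase κ A) ∧
    ¬ (IsDualNumberCase κ A ∧ IsSepFieldCase κ A) ∧
    ¬ (IsProdCase κ A ∧ IsInsepCase κ A) ∧
    ¬ (IsProdCase κ A ∧ IsSepFieldCase κ A) ∧
    ¬ (IsInsepCase κ A ∧ IsSepFieldCase κ A) := by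
  obtain ⟨x, hx⟩ : ∃ x : A, x ∉ (⊥ : Subalgebra κ A) := by
    by_contra! h
    exact hns fun y => Algebra.mem_bot.mp (h y)
  have hgen := adjoin_eq_top_of_notMem_bot hsub hx
  have hint := isIntegral_of_forall_subalgebra hsub x
  have hcases : IsDualNumberCase κ A ∨ IsProdCase κ A ∨ IsInsepCase κ A ∨ IsSepFieldCase κ A := by
    by_cases hirr : Irreducible (minpoly κ x)
    · have hfield := isField_of_irreducible_minpoly hgen hirr
      by_cases hsep : Algebra.IsSeparable κ A
      · exact Or.inr (Or.inr (Or.inr ⟨hfield, finite_of_adjoin_eq_top hint hgen, hsep, hns⟩))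
      · let := hfield.toField
        exact Or.inr (Or.inr (Or.inl (isInsepCase_of_not_isSeparable hsub hsep)))
    · obtain ⟨r, s, hrs⟩ := exists_minpoly_eq_X_sub_C_mul_X_sub_C hsub hint hirr
      rcases isDualNumberCase_or_isProdCase_of_minpoly_eq hsub hx hrs with h | h
      exacts [Or.inl h, Or.inr (Or.inl h)]
  refine ⟨hcases, ?_, ?_, ?_, ?_, ?_, ?_⟩ <;> rintro ⟨h₁, h₂⟩
  · exact h₁.not_isReduced h₂.isReduced
  · exact h₁.not_isReduced (isReduced_of_isField h₂.isField)
  · exact h₁.not_isReduced (isReduced_of_isField h₂.1)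
  · exact h₁.not_isField h₂.isField
  · exact h₁.not_isField h₂.1
  · exact h₁.not_isSeparable h₂.2.2.1

end PrimeAlgebraClassification
end

section
/- Let κ be a field and A a prime algebra over κ. If A is not reduced, then A is isomorphic as a κ-algebra to κ[ε]/(ε²). -/
/-- Let `κ` be a field and `A` a prime algebra over `κ` (i.e. `A ≠ 0`, `κ → A` is not
surjective, and the only `κ`-subalgebras of `A` are `κ` and `A`).  If `A` is not reduced,
then `A ≅ κ[ε]/(ε²)` as a `κ`-algebra. -/
theorem primeAlgebra_not_reduced_iso_dualNumber
    (κ : Type*) [Field κ] (A : Type*) [CommRing A] [Algebra κ A]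
    (hnt : Nontrivial A)
    (hns : ¬ Function.Surjective (algebraMap κ A))
    (hsub : ∀ S : Subalgebra κ A, S = ⊥ ∨ S = ⊤)
    (hnred : ¬ IsReduced A) :
    Nonempty (A ≃ₐ[κ] DualNumber κ) := by
  have hinj : Function.Injective (algebraMap κ A) := (algebraMap κ A).injective
  -- get a nonzero square-zero element
  rw [isReduced_iff_pow_one_lt 2 one_lt_two] at hnred
  push_neg at hnred
  obtain ⟨x, hx2, hx0⟩ := hnred
  rw [sq] at hx2
  -- the algebra hom κ[ε] →ₐ A sending ε to x
  set φ : DualNumber κ →ₐ[κ] A :=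
    DualNumber.lift ⟨(Algebra.ofId κ A, x), hx2, fun a => Commute.all _ _⟩ with hφ
  have hφε : φ DualNumber.eps = x := DualNumber.lift_apply_eps _
  have happ : ∀ p : DualNumber κ, φ p = algebraMap κ A p.fst + algebraMap κ A p.snd * x :=
    fun p => DualNumber.lift_apply_apply _ p
  -- injectivity
  have hinjφ : Function.Injective φ := by
    intro p q hpq
    have h : φ (p - q) = 0 := by rw [map_sub, hpq, sub_self]
    rw [happ] at h
    have hfst : (p - q).fst = 0 := by
      have h2 : algebraMap κ A ((p - q).fst ^ 2) = 0 := by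
        have := congrArg (· * (algebraMap κ A (p - q).fst - algebraMap κ A (p-q).snd * x)) h
        simp only [zero_mul] at this
        ring_nf at this ⊢
        rw [map_pow]
        calc algebraMap κ A (p - q).fst ^ 2
            = algebraMap κ A (p - q).fst ^ 2 - (algebraMap κ A (p-q).snd)^2 * (x * x) := by
              rw [hx2]; ring
          _ = 0 := by rw [← this]; ring
      have : (p - q).fst ^ 2 = 0 := by
        apply hinj; rwa [map_zero]
      exact pow_eq_zero_iff two_ne_zero |>.mp this
    have hsnd : (p - q).snd = 0 := by
      by_contra hb
      rw [hfst, map_zero, zero_add] at h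
      have h' : algebraMap κ A ((p - q).snd)⁻¹ * (algebraMap κ A ((p - q).snd) * x) = 0 := by
        rw [h, mul_zero]
      rw [← mul_assoc, ← map_mul, inv_mul_cancel₀ hb, map_one, one_mul] at h'
      exact hx0 h'
    have : p - q = 0 := TrivSqZeroExt.ext hfst hsnd
    exact sub_eq_zero.mp this
  -- surjectivity
  have hsurj : Function.Surjective φ := by
    have hxr : x ∈ φ.range := ⟨DualNumber.eps, hφε⟩
    rcases hsub φ.range with h | h
    · exfalso
      rw [h, Algebra.mem_bot] at hxr
      obtain ⟨c, hc⟩ := hxr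
      have : algebraMap κ A (c ^ 2) = 0 := by
        rw [map_pow, hc, sq, hx2]
      have hc2 : c ^ 2 = 0 := by apply hinj; rwa [map_zero]
      have : c = 0 := pow_eq_zero_iff two_ne_zero |>.mp hc2
      exact hx0 (by rw [← hc, this, map_zero])
    · intro a
      have : a ∈ φ.range := h ▸ Algebra.mem_top
      exact this
  exact ⟨(AlgEquiv.ofBijective φ ⟨hinjφ, hsurj⟩).symm⟩
end

section
/- Let κ be a field and A a prime algebra over κ which is reduced and not a field. Then A is isomorphic as a κ-algebra to κ × κ. -/
/-!
Applying the subalgebra dichotomy to `κ[a²]` shows that every `a` is algebraic, so `A = κ[a]`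
for any `a ∉ κ` is finite-dimensional, hence artinian. A reduced artinian ring that is not a
field has two distinct primes, which are separated by an idempotent `e ≠ 0, 1`. Then
`(c, d) ↦ c (1 - e) + d e` embeds `κ × κ` into `A`, and its range contains `e ∉ κ`, so it is
all of `A`.
-/

open Polynomial

/-- If `a = p (a ^ n)` then `X - expand n p` annihilates `a`, and its coefficient of `X` is `1`. -/
theorem isAlgebraic_of_mem_adjoin_pow {R A : Type*} [CommRing R] [Nontrivial R] [CommRing A]
    [Algebra R A] {a : A} {n : ℕ} (hn : 1 < n) (ha : a ∈ Algebra.adjoin R {a ^ n}) :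
    IsAlgebraic R a := by
  rw [Algebra.adjoin_singleton_eq_range_aeval] at ha
  obtain ⟨p, hp : aeval (a ^ n) p = a⟩ := ha
  refine ⟨X - expand R n p, fun h => ?_, ?_⟩
  · have := congrArg (coeff · 1) h
    simp only [coeff_sub, coeff_X_one, coeff_expand (by omega : 0 < n), Nat.dvd_one, hn.ne',
      if_false, coeff_zero, sub_zero] at this
    exact one_ne_zero this
  · rw [map_sub, aeval_X, expand_aeval, hp, sub_self]

theorem exists_isIdempotentElem_ne_zero_ne_one_of_not_isField {R : Type*} [CommRing R]
    [IsArtinianRing R] [IsReduced R] [Nontrivial R] (h : ¬ IsField R) :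
    ∃ e : R, IsIdempotentElem e ∧ e ≠ 0 ∧ e ≠ 1 := by
  have : Nontrivial (PrimeSpectrum R) := by
    rw [← not_subsingleton_iff_nontrivial, PrimeSpectrum.subsingleton_iff_isField_of_isReduced]
    exact h
  obtain ⟨p, q, hpq⟩ := exists_pair_ne (PrimeSpectrum R)
  obtain ⟨e, hep, he, heq⟩ := IsArtinianRing.exists_not_mem_forall_mem_of_ne p.asIdeal
  refine ⟨e, he, ?_, ?_⟩
  · rintro rfl
    exact hep p.asIdeal.zero_mem
  · rintro rfl
    exact q.isPrime.ne_top <| (Ideal.eq_top_iff_one _).2 <|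
      heq q.asIdeal q.isPrime fun h => hpq (PrimeSpectrum.ext h).symm

section SubalgebraDichotomy

variable {K A : Type*} [Field K] [CommRing A] [Algebra K A]

theorem isIntegral_of_forall_subalgebra_eq_bot_or_top
    (hsub : ∀ S : Subalgebra K A, S = ⊥ ∨ S = ⊤) (a : A) : IsIntegral K a := by
  rcases hsub (Algebra.adjoin K {a ^ 2}) with h | h
  · obtain ⟨c, hc⟩ := Algebra.mem_bot.1 (h ▸ Algebra.self_mem_adjoin_singleton K (a ^ 2))
    exact IsIntegral.of_pow two_pos (hc ▸ isIntegral_algebraMap)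
  · exact (isAlgebraic_of_mem_adjoin_pow one_lt_two (h ▸ Algebra.mem_top)).isIntegral

theorem finite_of_forall_subalgebra_eq_bot_or_top
    (hsub : ∀ S : Subalgebra K A, S = ⊥ ∨ S = ⊤) {a : A} (ha : a ∉ (⊥ : Subalgebra K A)) :
    Module.Finite K A := by
  have hadj : Algebra.adjoin K {a} = ⊤ :=
    (hsub _).resolve_left fun h => ha (h ▸ Algebra.self_mem_adjoin_singleton K a)
  have := Algebra.finite_adjoin_simple_of_isIntegral
    (isIntegral_of_forall_subalgebra_eq_bot_or_top hsub a)
  rw [hadj] at this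
  exact Module.Finite.equiv Subalgebra.topEquiv.toLinearEquiv

end SubalgebraDichotomy

namespace IsIdempotentElem

variable {A : Type*} [CommRing A] {e : A}

def prodAlgHom (R : Type*) [CommRing R] [Algebra R A] (he : IsIdempotentElem e) :
    R × R →ₐ[R] A where
  toFun x := algebraMap R A x.1 * (1 - e) + algebraMap R A x.2 * e
  map_one' := by simp
  map_mul' x y := by
    simp only [Prod.fst_mul, Prod.snd_mul, map_mul]
    linear_combination (algebraMap R A x.1 * algebraMap R A y.2
      + algebraMap R A x.2 * algebraMap R A y.1 - algebraMap R A x.1 * algebraMap R A y.1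
      - algebraMap R A x.2 * algebraMap R A y.2) * he.eq
  map_zero' := by simp
  map_add' x y := by
    simp only [Prod.fst_add, Prod.snd_add, map_add]
    ring
  commutes' c := by
    simp only [Prod.algebraMap_apply, Algebra.algebraMap_self, RingHom.id_apply]
    ring

variable {K : Type*} [Field K] [Algebra K A]

theorem prodAlgHom_injective (he : IsIdempotentElem e) (he0 : e ≠ 0) (he1 : e ≠ 1) :
    Function.Injective (he.prodAlgHom K) := by
  rw [injective_iff_map_eq_zero]
  rintro ⟨c, d⟩ h
  change algebraMap K A c * (1 - e) + algebraMap K A d * e = 0 at h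
  have hd : d • e = 0 := by
    rw [Algebra.smul_def]
    linear_combination e * h + (algebraMap K A c - algebraMap K A d) * he.eq
  have hc : c • (1 - e) = 0 := by
    rw [Algebra.smul_def]
    linear_combination (1 - e) * h - (algebraMap K A c - algebraMap K A d) * he.eq
  have hd0 : d = 0 := (smul_eq_zero.1 hd).resolve_right he0
  have hc0 : c = 0 := (smul_eq_zero.1 hc).resolve_right (sub_ne_zero.2 he1.symm)
  simp [hc0, hd0]

theorem notMem_bot (he : IsIdempotentElem e) (he0 : e ≠ 0) (he1 : e ≠ 1) :
    e ∉ (⊥ : Subalgebra K A) := by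
  intro hbot
  obtain ⟨c, rfl⟩ := Algebra.mem_bot.1 hbot
  have hc : c ≠ 0 := by rintro rfl; exact he0 (map_zero _)
  exact he1 ((iff_eq_one_of_isUnit ((isUnit_iff_ne_zero.2 hc).map _)).1 he)

theorem prodAlgHom_surjective (hsub : ∀ S : Subalgebra K A, S = ⊥ ∨ S = ⊤)
    (he : IsIdempotentElem e) (he0 : e ≠ 0) (he1 : e ≠ 1) :
    Function.Surjective (he.prodAlgHom K) := by
  have he_mem : e ∈ (he.prodAlgHom K).range := ⟨(0, 1), by simp [prodAlgHom]⟩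
  exact (AlgHom.range_eq_top _).1
    ((hsub _).resolve_left fun h => he.notMem_bot he0 he1 (h ▸ he_mem))

end IsIdempotentElem

/-- Let `κ` be a field and `A` a prime algebra over `κ` (i.e. `A ≠ 0`, `κ → A` is not
surjective, and the only `κ`-subalgebras of `A` are `κ` and `A`).  If `A` is reduced and
not a field, then `A ≅ κ × κ` as a `κ`-algebra. -/
theorem primeAlgebra_reduced_not_field_iso_prod
    (κ : Type*) [Field κ] (A : Type*) [CommRing A] [Algebra κ A]
    (hnt : Nontrivial A)
    (hns : ¬ Function.Surjective (algebraMap κ A))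
    (hsub : ∀ S : Subalgebra κ A, S = ⊥ ∨ S = ⊤)
    (hred : IsReduced A) (hnf : ¬ IsField A) :
    Nonempty (A ≃ₐ[κ] (κ × κ)) := by
  obtain ⟨a, ha⟩ : ∃ a : A, a ∉ (⊥ : Subalgebra κ A) := by
    simpa [Function.Surjective, Algebra.mem_bot] using hns
  have := finite_of_forall_subalgebra_eq_bot_or_top hsub ha
  have := IsArtinianRing.of_finite κ A
  obtain ⟨e, he, he0, he1⟩ := exists_isIdempotentElem_ne_zero_ne_one_of_not_isField hnf
  exact ⟨(AlgEquiv.ofBijective (he.prodAlgHom κ)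
    ⟨he.prodAlgHom_injective he0 he1, he.prodAlgHom_surjective hsub he0 he1⟩).symm⟩
end

section
/- Let κ be a field of characteristic p > 0 and A a prime algebra over κ which is a purely inseparable field extension of κ. Then A = κ(a^{1/p}) for some a ∈ κ \ κ^p; in particular [A : κ] = p. -/
open Polynomial

/-! Since `A` is purely inseparable and `κ ≠ A`, going up the chain `x, x ^ p, x ^ p ^ 2, …` from
any `x ∉ κ` yields `y ∉ κ` with `b := y ^ p ∈ κ`. Injectivity of Frobenius on `A` gives
`b ∉ κ ^ p`, so `X ^ p - C b` is irreducible and is the minimal polynomial of `y`. As `A` is prime,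
`κ[y] = A`, hence `A ≃ₐ[κ] κ[X] ⧸ (X ^ p - C b)`. -/

theorem exists_notMem_and_pow_mem {M : Type*} [Monoid M] {S : Set M} {x : M} (hx : x ∉ S)
    {p n : ℕ} (hn : x ^ p ^ n ∈ S) : ∃ y ∉ S, y ^ p ∈ S := by
  induction n generalizing x with
  | zero => exact absurd (by simpa using hn) hx
  | succ n ih =>
    by_cases hxp : x ^ p ∈ S
    · exact ⟨x, hx, hxp⟩
    · exact ih hxp (by rwa [← pow_mul, ← pow_succ'])

theorem IsPurelyInseparable.exists_notMem_range_and_pow_mem_range (κ : Type*) {A : Type*}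
    [Field κ] [Ring A] [IsDomain A] [Algebra κ A] [IsPurelyInseparable κ A] (q : ℕ) [ExpChar κ q]
    (hns : ¬ Function.Surjective (algebraMap κ A)) :
    ∃ y ∉ Set.range (algebraMap κ A), y ^ q ∈ Set.range (algebraMap κ A) := by
  obtain ⟨x, hx⟩ := not_forall.mp hns
  obtain ⟨n, hn⟩ := IsPurelyInseparable.pow_mem κ q x
  exact exists_notMem_and_pow_mem (S := Set.range (algebraMap κ A)) (by simpa using hx) hn

theorem notMem_range_pow_of_algebraMap_eq_pow {κ A : Type*} [CommSemiring κ] [CommRing A]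
    [IsReduced A] [Algebra κ A] (p : ℕ) [ExpChar A p] {y : A}
    (hy : y ∉ Set.range (algebraMap κ A)) {b : κ} (hb : algebraMap κ A b = y ^ p) :
    b ∉ Set.range (fun x : κ => x ^ p) := by
  rintro ⟨c, rfl⟩
  exact hy ⟨c, frobenius_inj A p (by simpa [frobenius_def] using hb)⟩

theorem minpoly_eq_X_pow_sub_C_of_algebraMap_eq_pow {κ A : Type*} [Field κ] [CommRing A]
    [IsReduced A] [Nontrivial A] [Algebra κ A] {p : ℕ} (hp : p.Prime) [ExpChar A p] {y : A}
    (hy : y ∉ Set.range (algebraMap κ A)) {b : κ} (hb : algebraMap κ A b = y ^ p) :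
    minpoly κ y = X ^ p - C b := by
  have hirr : Irreducible (X ^ p - C b) := X_pow_sub_C_irreducible_of_prime hp
    fun c hc => notMem_range_pow_of_algebraMap_eq_pow p hy hb ⟨c, hc⟩
  refine (minpoly.eq_of_irreducible_of_monic hirr ?_ (monic_X_pow_sub_C b hp.ne_zero)).symm
  simp [hb]

noncomputable def AlgEquiv.adjoinRootMinpolyOfAdjoinEqTop (F : Type*) {R : Type*} [Field F]
    [CommRing R] [Algebra F R] {x : R} (hx : Algebra.adjoin F {x} = ⊤) :
    R ≃ₐ[F] AdjoinRoot (minpoly F x) :=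
  (Subalgebra.topEquiv.symm.trans (Subalgebra.equivOfEq _ _ hx.symm)).trans
    (AlgEquiv.adjoinSingletonEquivAdjoinRootMinpoly F x)

/-- Let `κ` be a field of characteristic `p > 0` and `A` a prime algebra over `κ`
(i.e. `κ → A` is not surjective and the only `κ`-subalgebras of `A` are `κ` and `A`)
which is a purely inseparable field extension of `κ`.  Then `A = κ(a^{1/p})` for some
`a ∈ κ \ κ^p`; in particular `[A : κ] = p`. -/
theorem primeAlgebra_purelyInseparable_iso_adjoin_p_th_root
    (κ : Type*) [Field κ] (p : ℕ) (hp : p.Prime) [CharP κ p]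
    (A : Type*) [Field A] [Algebra κ A]
    (hns : ¬ Function.Surjective (algebraMap κ A))
    (hsub : ∀ S : Subalgebra κ A, S = ⊥ ∨ S = ⊤)
    (hpi : IsPurelyInseparable κ A) :
    (∃ a : κ, a ∉ Set.range (fun x : κ => x ^ p) ∧
      Nonempty (A ≃ₐ[κ] AdjoinRoot (X ^ p - C a))) ∧
    Module.finrank κ A = p := by
  have : Fact p.Prime := ⟨hp⟩
  have : CharP A p := charP_of_injective_algebraMap (algebraMap κ A).injective p
  obtain ⟨y, hy, b, hb⟩ := IsPurelyInseparable.exists_notMem_range_and_pow_mem_range κ p hns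
  have hadj : Algebra.adjoin κ {y} = ⊤ := (hsub _).resolve_left fun h =>
    hy (Algebra.mem_bot.mp (h ▸ Algebra.self_mem_adjoin_singleton κ y))
  have hmin := minpoly_eq_X_pow_sub_C_of_algebraMap_eq_pow hp hy hb
  let e : A ≃ₐ[κ] AdjoinRoot (X ^ p - C b) :=
    hmin ▸ AlgEquiv.adjoinRootMinpolyOfAdjoinEqTop κ hadj
  refine ⟨⟨b, notMem_range_pow_of_algebraMap_eq_pow p hy hb, ⟨e⟩⟩, ?_⟩
  rw [e.toLinearEquiv.finrank_eq, (AdjoinRoot.powerBasis (X_pow_sub_C_ne_zero hp.pos b)).finrank,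
    AdjoinRoot.powerBasis_dim, natDegree_X_pow_sub_C]
end

section
/- Let A be a commutative ring that is seminormal and let B be a reduced commutative A-algebra containing A. If b ∈ B satisfies b² ∈ A and b³ ∈ A, then b ∈ A. -/
/-- A commutative ring `A` is *seminormal* if for all `x, y ∈ A` with `x³ = y²`
there is a unique `a ∈ A` with `x = a²` and `y = a³`. -/
def SeminormalRing (A : Type*) [CommRing A] : Prop :=
  ∀ x y : A, x ^ 3 = y ^ 2 → ∃! a : A, x = a ^ 2 ∧ y = a ^ 3

/-- Let `A` be a seminormal commutative ring and `B` a reduced commutative `A`-algebra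
containing `A` (i.e. `A → B` is injective).  If `b ∈ B` satisfies `b² ∈ A` and `b³ ∈ A`,
then `b ∈ A`. -/
theorem mem_of_sq_mem_of_cube_mem_of_seminormal
    (A B : Type*) [CommRing A] [CommRing B] [Algebra A B] [IsReduced B]
    (hinj : Function.Injective (algebraMap A B))
    (hsn : SeminormalRing A) (b : B)
    (h2 : b ^ 2 ∈ Set.range (algebraMap A B))
    (h3 : b ^ 3 ∈ Set.range (algebraMap A B)) :
    b ∈ Set.range (algebraMap A B) := by
  obtain ⟨x, hx⟩ := h2
  obtain ⟨y, hy⟩ := h3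
  have hxy : x ^ 3 = y ^ 2 := by
    apply hinj
    rw [map_pow, map_pow, hx, hy]
    ring
  obtain ⟨a, ⟨ha2, ha3⟩, -⟩ := hsn x y hxy
  refine ⟨a, ?_⟩
  set c := algebraMap A B a with hc
  have hc2 : c ^ 2 = b ^ 2 := by rw [hc, ← map_pow, ← ha2, hx]
  have hc3 : c ^ 3 = b ^ 3 := by rw [hc, ← map_pow, ← ha3, hy]
  have key : (c - b) ^ 3 = 0 := by
    linear_combination 4 * hc3 - (3 * b + 3 * c) * hc2
  have : c - b = 0 := IsReduced.eq_zero _ ⟨3, key⟩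
  exact sub_eq_zero.mp this
end

section
/- Let A be a seminormal commutative ring, B a reduced ring extension of A, and suppose b₁, …, bₙ ∈ B are such that for each i, both bᵢ² and bᵢ³ lie in A[b₁, …, b_{i-1}]. Then A[b₁, …, bₙ] = A. -/
/-- If `x² ` and `x³` are images of elements of `A`, `A` seminormal, `B` reduced,
then `x` is the image of an element of `A`. -/
lemma mem_bot_of_sq_cube_mem_bot {A B : Type*} [CommRing A] [CommRing B] [Algebra A B]
    [IsReduced B] (hinj : Function.Injective (algebraMap A B)) (hsn : SeminormalRing A)
    (x : B) (h2 : x ^ 2 ∈ (⊥ : Subalgebra A B)) (h3 : x ^ 3 ∈ (⊥ : Subalgebra A B)) :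
    x ∈ (⊥ : Subalgebra A B) := by
  rw [Algebra.mem_bot] at h2 h3 ⊢
  obtain ⟨u, hu⟩ := h2
  obtain ⟨v, hv⟩ := h3
  have huv : u ^ 3 = v ^ 2 := by
    apply hinj
    rw [map_pow, map_pow, hu, hv]
    ring
  obtain ⟨a, ⟨ha2, ha3⟩, -⟩ := hsn u v huv
  set a' := algebraMap A B a with ha'
  have e2 : a' ^ 2 = x ^ 2 := by rw [ha', ← map_pow, ← ha2, hu]
  have e3 : a' ^ 3 = x ^ 3 := by rw [ha', ← map_pow, ← ha3, hv]
  have hnil : (a' - x) ^ 3 = 0 := by linear_combination 4 * e3 - 3 * (a' + x) * e2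
  have hz : a' - x = 0 := IsNilpotent.eq_zero ⟨3, hnil⟩
  exact ⟨a, sub_eq_zero.mp hz⟩

/-- Let `A` be a seminormal commutative ring, `B` a reduced ring extension of `A`, and
`b₁, …, bₙ ∈ B` such that for each `i` both `bᵢ²` and `bᵢ³` lie in `A[b₁, …, b_{i-1}]`.
Then `A[b₁, …, bₙ] = A`. -/
theorem adjoin_eq_bot_of_sq_cube_mem_of_seminormal
    (A B : Type*) [CommRing A] [CommRing B] [Algebra A B] [IsReduced B]
    (hinj : Function.Injective (algebraMap A B))
    (hsn : SeminormalRing A) (n : ℕ) (b : Fin n → B)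
    (hb : ∀ i : Fin n,
      (b i) ^ 2 ∈ Algebra.adjoin A (b '' {j : Fin n | j < i}) ∧
      (b i) ^ 3 ∈ Algebra.adjoin A (b '' {j : Fin n | j < i})) :
    Algebra.adjoin A (Set.range b) = ⊥ := by
  have key : ∀ m : ℕ, ∀ i : Fin n, (i : ℕ) = m → b i ∈ (⊥ : Subalgebra A B) := by
    intro m
    induction m using Nat.strong_induction_on with
    | _ m ih =>
      intro i hi
      have hsub : Algebra.adjoin A (b '' {j : Fin n | j < i}) ≤ ⊥ := by
        apply Algebra.adjoin_le
        rintro _ ⟨j, hj, rfl⟩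
        exact ih j.val (hi ▸ hj) j rfl
      exact mem_bot_of_sq_cube_mem_bot hinj hsn (b i) (hsub (hb i).1) (hsub (hb i).2)
  refine le_antisymm (Algebra.adjoin_le ?_) bot_le
  rintro _ ⟨i, rfl⟩
  exact key i.val i rfl
end

section
/- Let R be a commutative ring, A, B, C commutative R-algebras with maps A → B surjective and an injective map C → B. Set P = A ×_B C. If D is a flat P-algebra, then the canonical map D → (D ⊗_P A) ×_{D ⊗_P B} (D ⊗_P C) is an isomorphism. -/
/-!
Write `P = A ×_B C` as the kernel of `A × C → B, (a, c) ↦ φ a - ψ c`: the sequence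
`0 → P → A × C → B` is exact. Tensoring with the flat module `D` keeps it exact, and
`D ⊗_P (A × C) ≅ (D ⊗_P A) × (D ⊗_P C)`, so `D` is the kernel of
`(D ⊗_P A) × (D ⊗_P C) → D ⊗_P B`, which is the claim.
-/

open TensorProduct

namespace LinearMap

variable {R M M' N₁ N₂ Q : Type*} [CommRing R]
  [AddCommGroup M] [AddCommGroup M'] [AddCommGroup N₁] [AddCommGroup N₂] [AddCommGroup Q]
  [Module R M] [Module R M'] [Module R N₁] [Module R N₂] [Module R Q]

def IsPullback (u₁ : M →ₗ[R] N₁) (u₂ : M →ₗ[R] N₂) (v₁ : N₁ →ₗ[R] Q) (v₂ : N₂ →ₗ[R] Q) :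
    Prop :=
  Function.Injective (u₁.prod u₂) ∧ Set.range (u₁.prod u₂) = {x | v₁ x.1 = v₂ x.2}

variable {u₁ : M →ₗ[R] N₁} {u₂ : M →ₗ[R] N₂} {v₁ : N₁ →ₗ[R] Q} {v₂ : N₂ →ₗ[R] Q}

theorem isPullback_iff_exact :
    IsPullback u₁ u₂ v₁ v₂ ↔ Function.Injective (u₁.prod u₂) ∧
      Function.Exact (u₁.prod u₂) (v₁ ∘ₗ fst R N₁ N₂ - v₂ ∘ₗ snd R N₁ N₂) := by
  refine and_congr_right fun _ => Set.ext_iff.trans (forall_congr' fun x => ?_)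
  rw [sub_apply, comp_apply, comp_apply, fst_apply, snd_apply, sub_eq_zero]
  exact Iff.comm

theorem IsPullback.comp_linearEquiv (h : IsPullback u₁ u₂ v₁ v₂) (e : M' ≃ₗ[R] M) :
    IsPullback (u₁ ∘ₗ e.toLinearMap) (u₂ ∘ₗ e.toLinearMap) v₁ v₂ :=
  ⟨h.1.comp e.injective, (EquivLike.range_comp (u₁.prod u₂) e).trans h.2⟩

theorem IsPullback.lTensor (D : Type*) [AddCommGroup D] [Module R D] [Module.Flat R D]
    (h : IsPullback u₁ u₂ v₁ v₂) :
    IsPullback (u₁.lTensor D) (u₂.lTensor D) (v₁.lTensor D) (v₂.lTensor D) := by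
  rw [isPullback_iff_exact] at h ⊢
  let e := TensorProduct.prodRight R R D N₁ N₂
  have prod_lTensor : (u₁.lTensor D).prod (u₂.lTensor D) = e ∘ₗ (u₁.prod u₂).lTensor D := by
    refine TensorProduct.ext' fun d m => ?_
    simp [e]
  have diff_lTensor : (v₁.lTensor D ∘ₗ fst R _ _ - v₂.lTensor D ∘ₗ snd R _ _) ∘ₗ e =
      (v₁ ∘ₗ fst R N₁ N₂ - v₂ ∘ₗ snd R N₁ N₂).lTensor D := by
    refine TensorProduct.ext' fun d x => ?_
    simp [e]
  refine ⟨?_, ?_⟩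
  · rw [prod_lTensor]
    exact e.injective.comp (Module.Flat.lTensor_preserves_injective_linearMap _ h.1)
  · exact Function.Exact.of_ladder_linearEquiv_of_exact (e₁ := LinearEquiv.refl R _) (e₂ := e)
      (e₃ := LinearEquiv.refl R _) (by rw [prod_lTensor]; rfl) (by rw [diff_lTensor]; rfl)
      (Module.Flat.lTensor_exact D h.2)

end LinearMap

theorem Algebra.isPullback_linearMap {P A B C : Type*} [CommRing P] [CommRing A] [CommRing B]
    [CommRing C] [Algebra P A] [Algebra P B] [Algebra P C] {φ : A →ₐ[P] B} {ψ : C →ₐ[P] B}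
    (hcomp : ∀ p : P, φ (algebraMap P A p) = ψ (algebraMap P C p))
    (hfib : ∀ (a : A) (c : C), φ a = ψ c →
      ∃! p : P, algebraMap P A p = a ∧ algebraMap P C p = c) :
    LinearMap.IsPullback (Algebra.linearMap P A) (Algebra.linearMap P C)
      φ.toLinearMap ψ.toLinearMap := by
  refine ⟨fun p q hpq => ?_, Set.ext fun x => ⟨?_, fun hx => ?_⟩⟩
  · obtain ⟨_, -, huniq⟩ := hfib _ _ (hcomp p)
    exact (huniq p ⟨rfl, rfl⟩).trans (huniq q (Prod.ext_iff.mp hpq.symm)).symm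
  · rintro ⟨p, rfl⟩
    exact hcomp p
  · obtain ⟨p, hp, -⟩ := hfib x.1 x.2 hx
    exact ⟨p, Prod.ext hp.1 hp.2⟩

theorem flat_baseChange_of_fiberProduct_general
    (R P A B C D : Type)
    [CommRing P] [CommRing A] [CommRing B] [CommRing C] [CommRing D]
    [Algebra P A] [Algebra P B] [Algebra P C] [Algebra P D]
    [Algebra C B] [IsScalarTower P C B]
    (φ : A →ₐ[P] B)
    -- `P` is the fiber product `A ×_B C`:
    (hcomp : ∀ p : P, φ (algebraMap P A p) = algebraMap C B (algebraMap P C p))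
    (hfib : ∀ (a : A) (c : C), φ a = algebraMap C B c →
      ∃! p : P, algebraMap P A p = a ∧ algebraMap P C p = c)
    [Module.Flat P D] :
    Function.Injective (fun d : D =>
      ((Algebra.TensorProduct.includeLeft (R := P) (S := P) d : D ⊗[P] A),
       (Algebra.TensorProduct.includeLeft (R := P) (S := P) d : D ⊗[P] C))) ∧
    Set.range (fun d : D =>
      ((Algebra.TensorProduct.includeLeft (R := P) (S := P) d : D ⊗[P] A),
       (Algebra.TensorProduct.includeLeft (R := P) (S := P) d : D ⊗[P] C))) =
      {x : (D ⊗[P] A) × (D ⊗[P] C) |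
        Algebra.TensorProduct.map (AlgHom.id P D) φ x.1 =
        Algebra.TensorProduct.map (AlgHom.id P D) (IsScalarTower.toAlgHom P C B) x.2} := by
  have hD := ((Algebra.isPullback_linearMap (ψ := IsScalarTower.toAlgHom P C B) hcomp
    hfib).lTensor D).comp_linearEquiv (TensorProduct.rid P D).symm
  constructor
  · convert hD.1 using 1
    ext d <;> simp
  · convert hD.2 using 2
    · ext d <;> simp
    · rfl

/-- Let `P = A ×_B C` be a fiber product of commutative rings (over a base ring `R`),
where `φ : A → B` is surjective and `ψ = algebraMap C B` is injective and faithfully flat.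
If `D` is a flat `P`-algebra, then the canonical map
`D → (D ⊗_P A) ×_{D ⊗_P B} (D ⊗_P C)` is an isomorphism, i.e. the pair of canonical maps
`d ↦ (d ⊗ 1, d ⊗ 1)` is injective with range exactly the fiber product. -/
theorem flat_baseChange_of_fiberProduct
    (R P A B C D : Type)
    [CommRing R] [CommRing P] [CommRing A] [CommRing B] [CommRing C] [CommRing D]
    [Algebra R P] [Algebra P A] [Algebra P B] [Algebra P C] [Algebra P D]
    [Algebra C B] [IsScalarTower P C B]
    (φ : A →ₐ[P] B)
    (hφsurj : Function.Surjective φ)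
    (hψinj : Function.Injective (algebraMap C B))
    (hψff : Module.FaithfullyFlat C B)
    -- `P` is the fiber product `A ×_B C`:
    (hcomp : ∀ p : P, φ (algebraMap P A p) = algebraMap C B (algebraMap P C p))
    (hfib : ∀ (a : A) (c : C), φ a = algebraMap C B c →
      ∃! p : P, algebraMap P A p = a ∧ algebraMap P C p = c)
    [Module.Flat P D] :
    Function.Injective (fun d : D =>
      ((Algebra.TensorProduct.includeLeft (R := P) (S := P) d : D ⊗[P] A),
       (Algebra.TensorProduct.includeLeft (R := P) (S := P) d : D ⊗[P] C))) ∧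
    Set.range (fun d : D =>
      ((Algebra.TensorProduct.includeLeft (R := P) (S := P) d : D ⊗[P] A),
       (Algebra.TensorProduct.includeLeft (R := P) (S := P) d : D ⊗[P] C))) =
      {x : (D ⊗[P] A) × (D ⊗[P] C) |
        Algebra.TensorProduct.map (AlgHom.id P D) φ x.1 =
        Algebra.TensorProduct.map (AlgHom.id P D) (IsScalarTower.toAlgHom P C B) x.2} :=
  flat_baseChange_of_fiberProduct_general R P A B C D φ hcomp hfib
end
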